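/- Let $\mathcal{S} = (\mathit{Pos}, \mathit{Neg}, \mathit{Ex}, \mathit{Uni})$ be a contradiction-free sample in which all NFAs appearing in implications have finite languages. Then the propositional formula $\chi$, consisting of (1) $x_w$ for all $w \in \mathit{Pos}$ and $\neg x_w$ for all $w \in \mathit{Neg}$, (2) $x_u \to \bigvee_{v \in L(\mathcal{A})} x_v$ for each $(u,\mathcal{A}) \in \mathit{Ex}$, and (3) $x_u \to \bigwedge_{v \in L(\mathcal{A})} x_v$ for each $(u,\mathcal{A}) \in \mathit{Uni}$, is satisfiable; moreover, for any model $\mathfrak{M}$ of $\chi$, the prefix tree acceptor of the set $\mathit{Pos}' = \{w \mid \mathfrak{M}(x_w) = \mathrm{true}\}$ is a DFA consistent with $\mathcal{S}$. -/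
import Mathlib


/-- The set of prefixes of words in `X`. -/
def Pref {α : Type*} (X : Set (List α)) : Set (List α) := {u | ∃ v, u ++ v ∈ X}

/-- A run of the prefix tree acceptor of `X` from state `s` on a word, ending
in state `t`. -/
def PTARun {α : Type*} (X : Set (List α)) : List α → List α → List α → Prop
  | s, [], t => s = t
  | s, a :: w, t => (s ++ [a]) ∈ Pref X ∧ PTARun X (s ++ [a]) w t

/-- The language accepted by the prefix tree acceptor of `X`. -/
def PTALang {α : Type*} (X : Set (List α)) : Set (List α) :=
  {w | ∃ t, PTARun X [] w t ∧ t ∈ X}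

/-- A sample: positive words, negative words, and existential and universal
implications, the latter represented by pairs of a word and the (finite)
language of the corresponding NFA. -/
structure Sample (α : Type*) where
  Pos : Set (List α)
  Neg : Set (List α)
  Ex : Set (List α × Set (List α))
  Uni : Set (List α × Set (List α))

/-- Consistency of a language (e.g. the language of a DFA) with a sample. -/
def ConsistentLang {α : Type*} (L : Set (List α)) (S : Sample α) : Prop :=
  S.Pos ⊆ L ∧ S.Neg ∩ L = ∅ ∧
    (∀ p ∈ S.Ex, p.1 ∈ L → (L ∩ p.2).Nonempty) ∧
    (∀ p ∈ S.Uni, p.1 ∈ L → p.2 ⊆ L)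

/-- The language of a DFA. -/
def DFALang {Q α : Type*} (δ : Q → α → Q) (q0 : Q) (F : Set Q) : Set (List α) :=
  {w | w.foldl δ q0 ∈ F}


lemma ptarun_eq {α : Type*} {X : Set (List α)} :
    ∀ {w s t : List α}, PTARun X s w t → t = s ++ w
  | [], s, t, h => by simpa [PTARun] using h.symm
  | a :: w, s, t, h => by
      have := ptarun_eq h.2
      simpa [List.append_assoc] using this

lemma ptarun_of {α : Type*} {X : Set (List α)} :
    ∀ (w s : List α), s ++ w ∈ Pref X → PTARun X s w (s ++ w)
  | [], s, h => by simp [PTARun]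
  | a :: w, s, h => by
      refine ⟨?_, ?_⟩
      · obtain ⟨v, hv⟩ := h
        exact ⟨w ++ v, by simpa [List.append_assoc] using hv⟩
      · have := ptarun_of w (s ++ [a]) (by simpa [List.append_assoc] using h)
        simpa [List.append_assoc] using this

lemma ptalang_eq {α : Type*} (X : Set (List α)) : PTALang X = X := by
  ext w
  constructor
  · rintro ⟨t, hr, ht⟩
    have := ptarun_eq hr
    simpa [this] using ht
  · intro hw
    exact ⟨w, by simpa using ptarun_of (X := X) w [] ⟨[], by simpa using hw⟩, hw⟩

/-- Let `S` be a contradiction-free sample (some DFA is consistent with it)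
whose implications all involve finite languages.  Then the formula `χ` —
asserting `x w` for positive `w`, `¬ x w` for negative `w`,
`x u → ⋁_{v ∈ L(𝒜)} x v` for existential implications, and
`x u → ⋀_{v ∈ L(𝒜)} x v` for universal implications — is satisfiable, and
for every model `x` of `χ`, the prefix tree acceptor of the set
`Pos' = {w ∈ V | x w}` (where `V` is the set of all words occurring in `S`)
is consistent with `S`. -/
theorem stmt14 {α : Type*} (S : Sample α)
    (hPos : S.Pos.Finite) (hNeg : S.Neg.Finite)
    (hEx : S.Ex.Finite) (hUni : S.Uni.Finite)
    (hExFin : ∀ p ∈ S.Ex, p.2.Finite) (hUniFin : ∀ p ∈ S.Uni, p.2.Finite)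
    (hcf : ∃ (Q : Type) (_ : Fintype Q) (δ : Q → α → Q) (q0 : Q) (Fq : Set Q),
      ConsistentLang (DFALang δ q0 Fq) S) :
    (∃ x : List α → Prop,
      (∀ w ∈ S.Pos, x w) ∧ (∀ w ∈ S.Neg, ¬x w) ∧
        (∀ p ∈ S.Ex, x p.1 → ∃ v ∈ p.2, x v) ∧
        (∀ p ∈ S.Uni, x p.1 → ∀ v ∈ p.2, x v)) ∧
    (∀ x : List α → Prop,
      (∀ w ∈ S.Pos, x w) → (∀ w ∈ S.Neg, ¬x w) →
      (∀ p ∈ S.Ex, x p.1 → ∃ v ∈ p.2, x v) →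
      (∀ p ∈ S.Uni, x p.1 → ∀ v ∈ p.2, x v) →
      let V : Set (List α) :=
        S.Pos ∪ S.Neg ∪ (Prod.fst '' S.Ex) ∪ (Prod.fst '' S.Uni) ∪
          (⋃ p ∈ S.Ex, p.2) ∪ (⋃ p ∈ S.Uni, p.2)
      ConsistentLang (PTALang {w | w ∈ V ∧ x w}) S) := by
  obtain ⟨Q, _, δ, q0, Fq, hP, hN, hE, hU⟩ := hcf
  constructor
  · refine ⟨fun w => w ∈ DFALang δ q0 Fq, fun w hw => hP hw, ?_, ?_, ?_⟩
    · intro w hw hx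
      exact Set.eq_empty_iff_forall_notMem.mp hN w ⟨hw, hx⟩
    · intro p hp hx
      obtain ⟨v, hv1, hv2⟩ := hE p hp hx
      exact ⟨v, hv2, hv1⟩
    · intro p hp hx v hv
      exact hU p hp hx hv
  · intro x hxP hxN hxE hxU V
    rw [ConsistentLang, ptalang_eq]
    refine ⟨?_, ?_, ?_, ?_⟩
    · intro w hw
      exact ⟨Or.inl (Or.inl (Or.inl (Or.inl (Or.inl hw)))), hxP w hw⟩
    · rw [Set.eq_empty_iff_forall_notMem]
      rintro w ⟨hw, _, hx⟩
      exact hxN w hw hx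
    · rintro p hp ⟨_, hx⟩
      obtain ⟨v, hv, hxv⟩ := hxE p hp hx
      exact ⟨v, ⟨Or.inl (Or.inr (Set.mem_iUnion₂.mpr ⟨p, hp, hv⟩)), hxv⟩, hv⟩
    · rintro p hp ⟨_, hx⟩ v hv
      exact ⟨Or.inr (Set.mem_iUnion₂.mpr ⟨p, hp, hv⟩), hxU p hp hx v hv⟩
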